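/- arXiv:2210.12433 — 2 statements merged into one kernel-verified Lean document; each statement's English description precedes it below -/
import Mathlib

section
/- Let p be a prime and m ≥ 1. If m ≤ p − 1, then for every unit x in ℤ/p^mℤ and every integer x₀ with x ≡ x₀ (mod p), the element x₀^(p^(m−1)) mod p^m is the unique (p−1)-th root of unity in ℤ/p^mℤ congruent to x₀ modulo p. -/
/-- If `m ≤ p − 1`, then for every unit `x` of `ℤ/p^mℤ` and every integer `x₀` with
`x ≡ x₀ (mod p)`, the element `x₀^(p^(m−1))` in `ℤ/p^mℤ` is the unique `(p−1)`-th root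
of unity in `ℤ/p^mℤ` congruent to `x₀` modulo `p`. -/
theorem stmt1 (p m : ℕ) [Fact p.Prime] (hm : 1 ≤ m) (hmp : m ≤ p - 1)
    (x : ZMod (p ^ m)) (hx : IsUnit x) (x₀ : ℤ)
    (hxx₀ : ZMod.castHom (dvd_pow_self p (by omega : m ≠ 0)) (ZMod p) x = (x₀ : ZMod p)) :
    (((x₀ : ZMod (p ^ m)) ^ (p ^ (m - 1))) ^ (p - 1) = 1 ∧
      ZMod.castHom (dvd_pow_self p (by omega : m ≠ 0)) (ZMod p)
        ((x₀ : ZMod (p ^ m)) ^ (p ^ (m - 1))) = (x₀ : ZMod p)) ∧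
    ∀ y : ZMod (p ^ m), y ^ (p - 1) = 1 →
      ZMod.castHom (dvd_pow_self p (by omega : m ≠ 0)) (ZMod p) y = (x₀ : ZMod p) →
      y = (x₀ : ZMod (p ^ m)) ^ (p ^ (m - 1)) := by
  have hp : p.Prime := Fact.out
  have hm0 : m ≠ 0 := by omega
  have hp1 : 1 < p := hp.one_lt
  haveI : NeZero (p ^ m) := ⟨pow_ne_zero m hp.ne_zero⟩
  set f := ZMod.castHom (dvd_pow_self p hm0) (ZMod p) with hf
  set a : ZMod (p ^ m) := (x₀ : ZMod (p ^ m)) with ha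
  -- f a = x₀ mod p
  have hfa : f a = (x₀ : ZMod p) := by simp [ha, hf]
  -- (x₀ : ZMod p) is a unit
  have hux : IsUnit ((x₀ : ZMod p)) := by rw [← hxx₀]; exact hx.map _
  -- a is a unit
  have hu : IsUnit a := by
    have hpd : ¬ (p : ℕ) ∣ a.val := by
      intro h
      have h0 : ((a.val : ℕ) : ZMod p) = 0 := (ZMod.natCast_eq_zero_iff _ _).mpr h
      have hfa' : (ZMod.cast a : ZMod p) = (x₀ : ZMod p) := hfa
      rw [ZMod.natCast_val, hfa'] at h0
      rw [h0] at hux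
      exact (not_isUnit_zero hux).elim
    rw [← ZMod.natCast_zmod_val a, ZMod.isUnit_iff_coprime]
    exact ((Nat.Prime.coprime_iff_not_dvd hp).mpr hpd).symm.pow_right m
  -- part 1a via units and totient
  have htot : Nat.totient (p ^ m) = p ^ (m - 1) * (p - 1) := Nat.totient_prime_pow hp (by omega)
  have h1a : (a ^ (p ^ (m - 1))) ^ (p - 1) = 1 := by
    have h := ZMod.pow_totient hu.unit
    rw [htot, pow_mul] at h
    calc (a ^ p ^ (m-1)) ^ (p-1) = (((hu.unit ^ p ^ (m-1)) ^ (p-1) : (ZMod (p^m))ˣ) : ZMod (p^m)) := by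
          push_cast [hu.unit_spec]; ring
      _ = 1 := by rw [h]; rfl
  have h1b : f (a ^ (p ^ (m - 1))) = (x₀ : ZMod p) := by
    rw [map_pow, hfa, ZMod.pow_card_pow]
  refine ⟨⟨h1a, h1b⟩, ?_⟩
  intro y hy hfy
  have hyu : IsUnit y := IsUnit.of_pow_eq_one hy (by omega)
  -- units
  set G := (ZMod (p ^ m))ˣ
  set g := ZMod.unitsMap (dvd_pow_self p hm0)
  set t : G := hu.unit ^ (p ^ (m - 1)) with ht
  set z : G := hyu.unit * t⁻¹ with hz
  have htv : (t : ZMod (p ^ m)) = a ^ (p ^ (m - 1)) := by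
    rw [ht, Units.val_pow_eq_pow_val, hu.unit_spec]
  have htp : t ^ (p - 1) = 1 := by
    ext
    push_cast [htv]
    exact h1a
  have hyp : hyu.unit ^ (p - 1) = 1 := by ext; push_cast [hyu.unit_spec]; exact hy
  have hzp : z ^ (p - 1) = 1 := by
    rw [hz, mul_pow, hyp, inv_pow, htp, inv_one, one_mul]
  have hgy : g hyu.unit = g t := by
    ext
    simp only [g, ZMod.unitsMap_def, Units.coe_map, MonoidHom.coe_coe, hyu.unit_spec, htv]
    rw [hfy.trans h1b.symm]
  have hgz : g z = 1 := by
    rw [hz, map_mul, map_inv, hgy, mul_inv_cancel]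
  -- kernel cardinality
  have hcardG : Nat.card G = p ^ (m - 1) * (p - 1) := by
    rw [Nat.card_eq_fintype_card, ZMod.card_units_eq_totient, htot]
  have hcardQ : Nat.card (G ⧸ g.ker) = p - 1 := by
    rw [Nat.card_congr (QuotientGroup.quotientKerEquivOfSurjective g
      (ZMod.unitsMap_surjective (dvd_pow_self p hm0))).toEquiv]
    rw [Nat.card_eq_fintype_card, ZMod.card_units_eq_totient, Nat.totient_prime hp]
  have hcardK : Nat.card g.ker = p ^ (m - 1) := by
    have := Subgroup.card_eq_card_quotient_mul_card_subgroup g.ker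
    rw [hcardG, hcardQ] at this
    have hq : 0 < p - 1 := by omega
    nlinarith [this]
  have hzmem : z ∈ g.ker := MonoidHom.mem_ker.mpr hgz
  have hd1 : orderOf z ∣ p ^ (m - 1) := hcardK ▸ Subgroup.orderOf_dvd_natCard g.ker hzmem
  have hd2 : orderOf z ∣ p - 1 := orderOf_dvd_of_pow_eq_one hzp
  have hcop : Nat.Coprime (p - 1) (p ^ (m - 1)) := by
    have h0 : Nat.Coprime (p - 1) p := by
      refine Nat.coprime_comm.mp (hp.coprime_iff_not_dvd.mpr ?_)
      intro h
      have := Nat.le_of_dvd (by omega) h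
      omega
    exact h0.pow_right _
  have hone : orderOf z = 1 := Nat.eq_one_of_dvd_one (hcop ▸ Nat.dvd_gcd hd2 hd1)
  have hz1 : z = 1 := orderOf_eq_one_iff.mp hone
  have : hyu.unit = t := by
    have := mul_eq_one_iff_eq_inv.mp (hz ▸ hz1)
    exact this.trans (inv_inv t)
  calc y = (hyu.unit : ZMod (p ^ m)) := hyu.unit_spec.symm
    _ = (t : ZMod (p ^ m)) := by rw [this]
    _ = a ^ (p ^ (m - 1)) := htv
end

section
/- Let p be a prime, r ≥ 1, n ≥ 0, and d ≥ 1. If each variable x_{ij} is assigned weight at most d·p^i, then the r-fold Witt addition polynomial S_n^(r) has weighted degree at most d·p^n, and the r-fold Witt multiplication polynomial M_n^(r) has weighted degree at most r·d·p^n. -/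
open MvPolynomial Finset

namespace Stmt4Aux

variable {σ : Type*}

/-- All monomials in the support of `f` have weight at most `m`. -/
def DegLe (w : σ → ℕ) (m : ℕ) (f : MvPolynomial σ ℤ) : Prop :=
  ∀ e ∈ f.support, (Finsupp.weight w) e ≤ m

variable {w : σ → ℕ}

theorem degLe_iff {m : ℕ} {f : MvPolynomial σ ℤ} :
    f.weightedTotalDegree w ≤ m ↔ DegLe w m f := Finset.sup_le_iff

theorem DegLe.mono {m m' : ℕ} {f : MvPolynomial σ ℤ} (hf : DegLe w m f) (h : m ≤ m') :
    DegLe w m' f := fun e he => (hf e he).trans h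

theorem degLe_zero {m : ℕ} : DegLe w m (0 : MvPolynomial σ ℤ) := by
  intro e he; simp at he

theorem DegLe.add {m : ℕ} {f g : MvPolynomial σ ℤ} (hf : DegLe w m f) (hg : DegLe w m g) :
    DegLe w m (f + g) := by
  classical
  intro e he
  rcases Finset.mem_union.mp (MvPolynomial.support_add he) with h | h
  exacts [hf e h, hg e h]

theorem DegLe.neg {m : ℕ} {f : MvPolynomial σ ℤ} (hf : DegLe w m f) : DegLe w m (-f) := by
  intro e he
  rw [MvPolynomial.support_neg] at he
  exact hf e he

theorem DegLe.sub {m : ℕ} {f g : MvPolynomial σ ℤ} (hf : DegLe w m f) (hg : DegLe w m g) :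
    DegLe w m (f - g) := by
  rw [sub_eq_add_neg]; exact hf.add hg.neg

theorem DegLe.mul {m₁ m₂ : ℕ} {f g : MvPolynomial σ ℤ} (hf : DegLe w m₁ f) (hg : DegLe w m₂ g) :
    DegLe w (m₁ + m₂) (f * g) := by
  classical
  intro e he
  have := MvPolynomial.support_mul f g he
  rw [Finset.mem_add] at this
  obtain ⟨u, hu, v, hv, rfl⟩ := this
  rw [map_add]
  exact add_le_add (hf u hu) (hg v hv)

theorem degLe_monomial {m : ℕ} (e : σ →₀ ℕ) (c : ℤ) (h : (Finsupp.weight w) e ≤ m) :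
    DegLe w m (MvPolynomial.monomial e c) := by
  intro e' he'
  rw [MvPolynomial.support_monomial] at he'
  split at he'
  · simp at he'
  · rw [Finset.mem_singleton] at he'; subst he'; exact h

theorem degLe_C {m : ℕ} (c : ℤ) : DegLe w m (MvPolynomial.C c : MvPolynomial σ ℤ) := by
  have : (MvPolynomial.C c : MvPolynomial σ ℤ) = MvPolynomial.monomial 0 c := by
    simp [MvPolynomial.monomial_zero']
  rw [this]
  exact degLe_monomial _ _ (by simp)

theorem degLe_one : DegLe w 0 (1 : MvPolynomial σ ℤ) := by
  simpa using degLe_C (w := w) (m := 0) (1 : ℤ)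

theorem DegLe.pow {m : ℕ} {f : MvPolynomial σ ℤ} (hf : DegLe w m f) (k : ℕ) :
    DegLe w (k * m) (f ^ k) := by
  induction k with
  | zero => simpa using degLe_one (w := w)
  | succ k ih =>
      rw [Nat.succ_mul, pow_succ]
      exact ih.mul hf

theorem degLe_sum {ι : Type*} {s : Finset ι} {m : ℕ} {f : ι → MvPolynomial σ ℤ}
    (h : ∀ i ∈ s, DegLe w m (f i)) : DegLe w m (∑ i ∈ s, f i) := by
  classical
  induction s using Finset.induction with
  | empty => simpa using degLe_zero (w := w)
  | insert _ _ hi ih =>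
      rw [Finset.sum_insert hi]
      exact (h _ (Finset.mem_insert_self _ _)).add
        (ih fun i hmem => h i (Finset.mem_insert_of_mem hmem))

theorem degLe_prod {ι : Type*} {s : Finset ι} {m : ℕ} {f : ι → MvPolynomial σ ℤ}
    (h : ∀ i ∈ s, DegLe w m (f i)) : DegLe w (s.card * m) (∏ i ∈ s, f i) := by
  classical
  induction s using Finset.induction with
  | empty => simpa using degLe_one (w := w)
  | @insert a s hi ih =>
      rw [Finset.prod_insert hi, Finset.card_insert_of_notMem hi, add_mul, one_mul, add_comm]
      exact (h _ (Finset.mem_insert_self _ _)).mul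
        (ih fun i hmem => h i (Finset.mem_insert_of_mem hmem))

theorem DegLe.of_C_mul {m : ℕ} {c : ℤ} (hc : c ≠ 0) {f : MvPolynomial σ ℤ}
    (h : DegLe w m (MvPolynomial.C c * f)) : DegLe w m f := by
  intro e he
  apply h e
  rw [MvPolynomial.mem_support_iff, MvPolynomial.coeff_C_mul]
  exact mul_ne_zero hc (MvPolynomial.mem_support_iff.mp he)

theorem weight_single (s : σ) (k : ℕ) :
    (Finsupp.weight w) (Finsupp.single s k) = k * w s := by
  rw [Finsupp.weight_apply, Finsupp.sum_single_index] <;> simp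

theorem degLe_X {m : ℕ} (s : σ) (h : w s ≤ m) :
    DegLe w m (MvPolynomial.X s : MvPolynomial σ ℤ) := by
  rw [MvPolynomial.X]
  exact degLe_monomial _ _ (by rw [weight_single]; simpa using h)

/-- The key induction: if the "target" polynomials all satisfy the degree bound `c * p^n`,
then so do the Witt structure polynomials. -/
theorem degLe_wittStructureInt (p : ℕ) [Fact p.Prime] {idx : Type*}
    (w : idx × ℕ → ℕ) (Φ : MvPolynomial idx ℤ) (c : ℕ)
    (hΦ : ∀ n : ℕ, DegLe w (c * p ^ n)
      (MvPolynomial.bind₁ (fun i => MvPolynomial.rename (Prod.mk i) (wittPolynomial p ℤ n)) Φ)) :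
    ∀ n : ℕ, DegLe w (c * p ^ n) (wittStructureInt p Φ n) := by
  intro n
  induction n using Nat.strong_induction_on with
  | _ n ih =>
    have hp : (p : ℤ) ≠ 0 := by
      exact_mod_cast (Fact.out : p.Prime).ne_zero
    have key := wittStructureInt_prop p Φ n
    conv at key => lhs; rw [wittPolynomial_eq_sum_C_mul_X_pow, map_sum]
    simp only [map_mul, map_pow, MvPolynomial.bind₁_X_right, MvPolynomial.bind₁_C_right,
      MvPolynomial.algebraMap_eq] at key
    rw [Finset.sum_range_succ, Nat.sub_self, pow_zero, pow_one] at key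
    have heq : MvPolynomial.C (p : ℤ) ^ n * wittStructureInt p Φ n =
        (MvPolynomial.bind₁ (fun i => MvPolynomial.rename (Prod.mk i) (wittPolynomial p ℤ n)) Φ)
          - ∑ i ∈ Finset.range n,
              MvPolynomial.C (p : ℤ) ^ i * wittStructureInt p Φ i ^ p ^ (n - i) := by
      rw [← key]; ring
    have hCpow : ∀ i : ℕ, DegLe w 0 (MvPolynomial.C (p : ℤ) ^ i : MvPolynomial (idx × ℕ) ℤ) := by
      intro i
      have := (degLe_C (w := w) (m := 0) (p : ℤ)).pow i
      simpa using this
    have hbound : DegLe w (c * p ^ n) (MvPolynomial.C (p : ℤ) ^ n * wittStructureInt p Φ n) := by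
      rw [heq]
      refine (hΦ n).sub (degLe_sum ?_)
      intro i hi
      rw [Finset.mem_range] at hi
      have h1 : DegLe w (0 + p ^ (n - i) * (c * p ^ i))
          (MvPolynomial.C (p : ℤ) ^ i * wittStructureInt p Φ i ^ p ^ (n - i)) :=
        (hCpow i).mul ((ih i hi).pow _)
      refine h1.mono (le_of_eq ?_)
      rw [zero_add, show p ^ (n - i) * (c * p ^ i) = c * (p ^ (n - i) * p ^ i) by ring,
        ← pow_add, Nat.sub_add_cancel hi.le]
    rw [← MvPolynomial.C_pow] at hbound
    exact hbound.of_C_mul (pow_ne_zero n hp)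

end Stmt4Aux

/-- If each variable `x_{ij}` is assigned weight `w (j,i) ≤ d·p^i`, then the `r`-fold Witt
addition polynomial `S_n^(r)` has weighted degree at most `d·p^n`, and the `r`-fold Witt
multiplication polynomial `M_n^(r)` has weighted degree at most `r·d·p^n`. -/
theorem stmt4 (p : ℕ) [Fact p.Prime] (r d n : ℕ) (hr : 1 ≤ r) (hd : 1 ≤ d)
    (w : Fin r × ℕ → ℕ) (hw : ∀ ji : Fin r × ℕ, w ji ≤ d * p ^ ji.2) :
    MvPolynomial.weightedTotalDegree w
        (wittStructureInt p (∑ j : Fin r, MvPolynomial.X j) n) ≤ d * p ^ n ∧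
    MvPolynomial.weightedTotalDegree w
        (wittStructureInt p (∏ j : Fin r, MvPolynomial.X j) n) ≤ r * d * p ^ n := by
  have hrename : ∀ (m : ℕ) (j : Fin r), Stmt4Aux.DegLe w (d * p ^ m)
      (MvPolynomial.rename (Prod.mk j) (wittPolynomial p ℤ m)) := by
    intro m j
    rw [wittPolynomial_eq_sum_C_mul_X_pow, map_sum]
    refine Stmt4Aux.degLe_sum ?_
    intro i hi
    rw [Finset.mem_range, Nat.lt_succ_iff] at hi
    simp only [map_mul, map_pow, MvPolynomial.rename_C, MvPolynomial.rename_X]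
    have hCpow : Stmt4Aux.DegLe w 0 (MvPolynomial.C (p : ℤ) ^ i : MvPolynomial (Fin r × ℕ) ℤ) := by
      have := (Stmt4Aux.degLe_C (w := w) (m := 0) (p : ℤ)).pow i
      simpa using this
    have h1 : Stmt4Aux.DegLe w (0 + p ^ (m - i) * (d * p ^ i))
        (MvPolynomial.C (p : ℤ) ^ i * MvPolynomial.X (j, i) ^ p ^ (m - i)) :=
      hCpow.mul ((Stmt4Aux.degLe_X (j, i) (hw (j, i))).pow _)
    exact h1.mono (le_of_eq (by
      rw [zero_add, show p ^ (m - i) * (d * p ^ i) = d * (p ^ (m - i) * p ^ i) by ring,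
        ← pow_add, Nat.sub_add_cancel hi] : 0 + p ^ (m - i) * (d * p ^ i) = d * p ^ m))
  constructor
  · rw [Stmt4Aux.degLe_iff]
    refine Stmt4Aux.degLe_wittStructureInt p w _ d ?_ n
    intro m
    rw [map_sum]
    simp only [MvPolynomial.bind₁_X_right]
    exact Stmt4Aux.degLe_sum fun j _ => hrename m j
  · rw [Stmt4Aux.degLe_iff]
    refine Stmt4Aux.degLe_wittStructureInt p w _ (r * d) ?_ n
    intro m
    rw [map_prod]
    simp only [MvPolynomial.bind₁_X_right]
    have := Stmt4Aux.degLe_prod (s := Finset.univ) (f := fun j : Fin r =>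
      MvPolynomial.rename (Prod.mk j) (wittPolynomial p ℤ m)) (fun j _ => hrename m j)
    simpa [mul_assoc] using this
end
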